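/- Let a ≥ 1 be an integer divisible by n, let λ_2 ≥ λ_3 and Γ_13 ≥ 0 be integers, and set L = Γ_13 + λ_2 − λ_3 + 1. Define δ_a(c) = 0 if c < a, δ_a(c) = −v if c = a, δ_a(c) = 1 − v if c > a, and h(c) = h♭(c) if c < L and h(c) = g♭(c) if c = L. Then for every 1 ≤ i ≤ r: D_i(f) = 0, where f = Σ_{c=1}^{L} δ_a(c)·h(c)·x_i^{λ_3 + c − Γ_13}·x_{i+1}^{λ_2 + a − c}. -/

import Mathlib

open scoped BigOperators Classical
open Fin.NatCast

noncomputable section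

namespace MetaPaper

variable (F : Type) [Field F]

/-- The field of rational functions in `x_1, …, x_{r+1}` over `F`. -/
abbrev K (r : ℕ) : Type := FractionRing (MvPolynomial (Fin (r+1)) F)

variable (r : ℕ)

/-- The variable `x_i` as an element of `K`. -/
def XX (i : Fin (r+1)) : K F r :=
  algebraMap (MvPolynomial (Fin (r+1)) F) (K F r) (MvPolynomial.X i)

/-- A constant from `F` as an element of `K`. -/
def CC (c : F) : K F r :=
  algebraMap (MvPolynomial (Fin (r+1)) F) (K F r) (MvPolynomial.C c)

/-- The monomial `x^λ = x_1^{λ_1} ⋯ x_{r+1}^{λ_{r+1}}`. -/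
def mon (lam : Fin (r+1) → ℤ) : K F r := ∏ i, XX F r i ^ lam i

/-- The simple reflection `σ_{i+1}` (0-indexed: swapping coordinates `i` and `i+1`). -/
def sref (i : ℕ) : Equiv.Perm (Fin (r+1)) :=
  Equiv.swap ((i : Fin (r+1))) (((i+1 : ℕ) : Fin (r+1)))

/-- The product of the simple reflections indexed by a word. -/
def wordProd (l : List ℕ) : Equiv.Perm (Fin (r+1)) := (l.map (sref r)).prod

/-- The (Coxeter) length of a permutation: the least length of a word in the
simple reflections representing it. -/
def plen (u : Equiv.Perm (Fin (r+1))) : ℕ :=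
  sInf {m | ∃ l : List ℕ, (∀ i ∈ l, i < r) ∧ l.length = m ∧ wordProd r l = u}

/-- The strong Bruhat order: `u ≤ w` iff `u` is the product of a subword of a
reduced word for `w`. -/
def BruhatLE (u w : Equiv.Perm (Fin (r+1))) : Prop :=
  ∃ l : List ℕ, (∀ i ∈ l, i < r) ∧ wordProd r l = w ∧ l.length = plen r w ∧
    ∃ l' : List ℕ, l'.Sublist l ∧ wordProd r l' = u

/-- The favourite reduced word `σ_1, σ_2 σ_1, σ_3 σ_2 σ_1, …` (0-indexed) for the
longest element of `S_{m+1}`. -/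
def favWord (m : ℕ) : List ℕ := (List.range m).flatMap (fun b => (List.range (b+1)).reverse)

/-- `x^{α_i} = x_i / x_{i+1}` (0-indexed `i`). -/
def xalpha (i : ℕ) : K F r := XX F r (i : Fin (r+1)) / XX F r ((i+1 : ℕ) : Fin (r+1))

/-- The sublattice `Λ₀` of exponent vectors whose coordinates are all congruent mod `n`. -/
def Lam0 (n : ℕ) : Set (Fin (r+1) → ℤ) := {lam | ∀ i j, (n : ℤ) ∣ lam i - lam j}

/-- The subfield `K₀` of `K` generated by the monomials `x^λ` with `λ ∈ Λ₀`. -/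
def K0 (n : ℕ) : Subfield (K F r) :=
  Subfield.closure {x | ∃ lam ∈ Lam0 r n, x = mon F r lam}

variable (n : ℕ) (v : F) (g : ℤ → F)

/-- Data of the metaplectic (Chinta–Gunnells) action of `W = S_{r+1}` on `K`,
together with the ordinary permutation action, and their defining properties. -/
structure Setup : Type where
  /-- the Chinta–Gunnells action -/
  act : Equiv.Perm (Fin (r+1)) → K F r → K F r
  /-- the ordinary permutation action on `K` -/
  perm : Equiv.Perm (Fin (r+1)) → K F r ≃+* K F r
  perm_X : ∀ w i, perm w (XX F r i) = XX F r (w i)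
  perm_const : ∀ w c, perm w (CC F r c) = CC F r c
  perm_one : ∀ f, perm 1 f = f
  perm_mul : ∀ u w f, perm (u * w) f = perm u (perm w f)
  act_one : ∀ f, act 1 f = f
  act_mul : ∀ u w f, act (u * w) f = act u (act w f)
  act_add : ∀ w f h, act w (f + h) = act w f + act w h
  act_const_mul : ∀ w c f, act w (CC F r c * f) = CC F r c * act w f
  act_simple : ∀ i : ℕ, i < r → ∀ lam : Fin (r+1) → ℤ,
    act (sref r i) (mon F r lam) =
      mon F r (fun j => lam (sref r i j)) / (1 - CC F r v * xalpha F r i ^ (n : ℕ)) *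
        (xalpha F r i ^ (-((lam (((i+1 : ℕ) : Fin (r+1))) - lam ((i : Fin (r+1)))) % (n : ℤ)))
            * (1 - CC F r v)
          - CC F r v * CC F r (g (1 + lam (((i+1 : ℕ) : Fin (r+1))) - lam ((i : Fin (r+1)))))
            * xalpha F r i ^ (1 - (n : ℤ)) * (1 - xalpha F r i ^ (n : ℕ)))
  act_K0 : ∀ i : ℕ, i < r → ∀ h f : K F r, h ∈ K0 F r n →
    act (sref r i) (h * f) = perm (sref r i) h * act (sref r i) f

variable {F r n v g}

/-- The metaplectic Demazure operator `D_i`. -/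
def Dem (S : Setup F r n v g) (i : ℕ) (f : K F r) : K F r :=
  (f - xalpha F r i ^ (n : ℕ) * S.act (sref r i) f) / (1 - xalpha F r i ^ (n : ℕ))

/-- The metaplectic Demazure–Lusztig operator `T_i`. -/
def DL (S : Setup F r n v g) (i : ℕ) (f : K F r) : K F r :=
  (1 - CC F r v * xalpha F r i ^ (n : ℕ)) * Dem S i f - f

/-- `D_{i_1} ⋯ D_{i_l}` for a word `[i_1, …, i_l]`. -/
def DWord (S : Setup F r n v g) : List ℕ → K F r → K F r
  | [] => fun f => f
  | i :: l => fun f => Dem S i (DWord S l f)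

/-- `T_{i_1} ⋯ T_{i_l}` for a word `[i_1, …, i_l]`. -/
def TWord (S : Setup F r n v g) : List ℕ → K F r → K F r
  | [] => fun f => f
  | i :: l => fun f => DL S i (TWord S l f)

/-- `D_u` for `u ∈ W`, via a chosen reduced word for `u` (by the braid relations
this does not depend on the choice). -/
def Dperm (S : Setup F r n v g) (u : Equiv.Perm (Fin (r+1))) : K F r → K F r :=
  if h : ∃ l : List ℕ, (∀ i ∈ l, i < r) ∧ l.length = plen r u ∧ wordProd r l = u
  then DWord S h.choose else id

/-- `T_u` for `u ∈ W`, via a chosen reduced word for `u`. -/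
def Tperm (S : Setup F r n v g) (u : Equiv.Perm (Fin (r+1))) : K F r → K F r :=
  if h : ∃ l : List ℕ, (∀ i ∈ l, i < r) ∧ l.length = plen r u ∧ wordProd r l = u
  then TWord S h.choose else id

variable (F r n v g)

/-- `a : ℕ → ℕ → ℤ` encodes a Gelfand–Tsetlin pattern of rank `m`
(entries `a i j`, `0 ≤ i ≤ j ≤ m`, zero outside this triangle). -/
def IsGT (m : ℕ) (a : ℕ → ℕ → ℤ) : Prop :=
  (∀ i j, (j < i ∨ m < j) → a i j = 0) ∧
  (∀ i j, i ≤ j → j ≤ m → 0 ≤ a i j) ∧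
  (∀ i j, 1 ≤ i → i ≤ j → j ≤ m → a i j ≤ a (i-1) (j-1) ∧ a (i-1) j ≤ a i j)

/-- `d_i`, the sum of the `i`-th row of a pattern. -/
def rowSum (m : ℕ) (a : ℕ → ℕ → ℤ) (i : ℕ) : ℤ := ∑ j ∈ Finset.Icc i m, a i j

/-- The `p`-th coordinate (0-indexed) of the weight `wt(T) = (d_m, d_{m-1}-d_m, …, d_0-d_1)`. -/
def wtN (m : ℕ) (a : ℕ → ℕ → ℤ) (p : ℕ) : ℤ := rowSum m a (m - p) - rowSum m a (m - p + 1)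

/-- The Γ-array of a pattern: `Γ_{i,j} = Σ_{k=j}^{m} (a_{i,k} - a_{i-1,k})`. -/
def GammaArr (m : ℕ) (a : ℕ → ℕ → ℤ) (i j : ℕ) : ℤ :=
  ∑ k ∈ Finset.Icc j m, (a i k - a (i-1) k)

/-- `h♭(a) = 1 - v` if `n ∣ a`, else `0`. -/
def hflat (a : ℤ) : F := if (n : ℤ) ∣ a then 1 - v else 0

/-- `g♭(a) = v · g_a`. -/
def gflat (a : ℤ) : F := v * g a

/-- The factor `g_{ij}(T)` of the degree-`n` Gelfand–Tsetlin coefficient. -/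
def gcoefP (m : ℕ) (a : ℕ → ℕ → ℤ) (i j : ℕ) : F :=
  if GammaArr m a i (j+1) = GammaArr m a i j ∧
      GammaArr m a i j < GammaArr m a i (j+1) + a (i-1) (j-1) - a (i-1) j then 1
  else if GammaArr m a i (j+1) < GammaArr m a i j ∧
      GammaArr m a i j < GammaArr m a i (j+1) + a (i-1) (j-1) - a (i-1) j then
    hflat F n v (GammaArr m a i j)
  else if GammaArr m a i (j+1) < GammaArr m a i j ∧
      GammaArr m a i j = GammaArr m a i (j+1) + a (i-1) (j-1) - a (i-1) j then
    gflat F v g (GammaArr m a i j)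
  else 0

/-- The degree-`n` Gelfand–Tsetlin coefficient `G^{(n)}(T)`. -/
def Gcoef (m : ℕ) (a : ℕ → ℕ → ℤ) : F :=
  ∏ i ∈ Finset.Icc 1 m, ∏ j ∈ Finset.Icc i m, gcoefP F n v g m a i j

/-- `Γ = (Γ_1, …, Γ_m)` (1-indexed, zero outside) is `ν`-admissible. -/
def IsAdm (m : ℕ) (ν Γ : ℕ → ℤ) : Prop :=
  (∀ j, j = 0 ∨ m < j → Γ j = 0) ∧
  ∀ j, 1 ≤ j → j ≤ m → Γ (j+1) ≤ Γ j ∧ Γ j ≤ Γ (j+1) + ν j - ν (j+1) + 1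

/-- `Γ` is `(ν,k)`-admissible. -/
def IsAdmK (m k : ℕ) (ν Γ : ℕ → ℤ) : Prop := IsAdm m ν Γ ∧ ∀ j, k + 1 < j → Γ j = 0

/-- The `p`-th coordinate (0-indexed) of
`wt^{(ν)}(Γ) = (ν_{m+1}+Γ_m, ν_m+Γ_{m-1}-Γ_m, …, ν_1-Γ_1)`. -/
def wtGam (m : ℕ) (ν Γ : ℕ → ℤ) (p : ℕ) : ℤ := ν (m+1-p) + Γ (m-p) - Γ (m-p+1)

/-- The factor `c_j` of `G_1^{(ν)}(Γ)`. -/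
def gamCoef (ν Γ : ℕ → ℤ) (j : ℕ) : F :=
  if Γ (j+1) = Γ j ∧ Γ j < Γ (j+1) + ν j - ν (j+1) + 1 then 1
  else if Γ (j+1) < Γ j ∧ Γ j < Γ (j+1) + ν j - ν (j+1) + 1 then hflat F n v (Γ j)
  else if Γ (j+1) < Γ j ∧ Γ j = Γ (j+1) + ν j - ν (j+1) + 1 then gflat F v g (Γ j)
  else 0

/-- `G_1^{(ν)}(Γ)`. -/
def G1 (m : ℕ) (ν Γ : ℕ → ℤ) : F := ∏ j ∈ Finset.Icc 1 m, gamCoef F n v g ν Γ j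

/-- The top row `λ + ρ` of a pattern, as a function `ℕ → ℤ` (0-indexed columns). -/
def topRowOf (lam : Fin (r+1) → ℤ) : ℕ → ℤ :=
  fun j => if h : j ≤ r then lam ⟨j, by omega⟩ + ((r : ℤ) - (j : ℤ)) else 0

/-- The weight `λ` reread as a 1-indexed function `ℕ → ℤ` (`ν_j = λ_j`). -/
def nuOf (lam : Fin (r+1) → ℤ) : ℕ → ℤ :=
  fun j => if h : 1 ≤ j ∧ j ≤ r + 1 then lam ⟨j - 1, by omega⟩ else 0

/-- Dominance: `λ_1 ≥ λ_2 ≥ … `. -/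
def Dominant (m : ℕ) (lam : Fin m → ℤ) : Prop := ∀ i j : Fin m, i ≤ j → lam j ≤ lam i

/-- Position of `Γ_{i,j}` in the reading `b_1, b_2, …` of the Γ-array
(rows bottom to top, each row left to right). -/
def bpos (m i j : ℕ) : ℕ := (m - i) * (m - i + 1) / 2 + (j - i + 1)


/-- `δ(A,B) = h♭(A)` if `A < B`, `h♭(A) - 1` if `A = B`, `0` if `A > B`. -/
def deltaHG (A B : ℤ) : F :=
  if A < B then hflat F n v A else if A = B then hflat F n v A - 1 else 0

/-!
Put `t = x_i / x_{i+1}` and `N = L - 1 + a`. Up to the common factor `(x_i x_{i+1})^(λ_3 - Γ_13)`,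
the monomials of `f` are `x^λ = x_i^c x_{i+1}^(N-c)`, and the numerator `x^λ - t^n σ_i(x^λ)` of
`D_i(x^λ)` is `x_{i+1}^N / (1 - v t^n)` times a Laurent polynomial `P_c(t)` (`demNumer`). So
`D_i f = 0` becomes the identity `∑_c δ_a(c) h(c) P_c(t) = 0`. If `L < a` every coefficient
vanishes, and if `L = a` the only term has `λ_i - λ_{i+1} = 1`, where `P_c = 0`. If `a < L`, only
`c = L` and the `c = a + kn < L` contribute. On the latter `N - 2c` has a constant residue `ρ`
mod `n`, so the `P_{a+kn}` are sums of differences that telescope once one of them is summed in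
reverse order. What remains is cancelled by the top term `c = L`, using `g_0 = -1` when `n ∣ L`
and `g_{ρ+1} g_{n-ρ-1} = v⁻¹` otherwise.
-/

open Finset

theorem _root_.Int.emod_eq_of_dvd_sub {n x y : ℤ} (h : n ∣ x - y) (hy0 : 0 ≤ y)
    (hyn : y < n) : x % n = y :=
  Eq.trans (Int.modEq_iff_dvd.mpr h).symm (Int.emod_eq_of_lt hy0 hyn)

theorem _root_.Function.Periodic.eq_of_dvd_sub {α : Type*} {f : ℤ → α} {n : ℤ}
    (hf : Function.Periodic f n) {i j : ℤ} (h : n ∣ i - j) : f i = f j := by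
  obtain ⟨k, hk⟩ := h
  rw [show i = j + k * n by linarith]
  exact hf.int_mul k j

theorem _root_.Finset.sum_range_reflect_telescope {R : Type*} [CommRing R] (s w : ℕ → R)
    (v u : R) (m : ℕ) :
    ∑ k ∈ range m, (s k - v * s (k + 1) - (1 - v) * s (m - k) + u * (w (k + 1) - w k)) =
      s 0 - s m + u * (w m - w 0) := by
  have hreflect : ∑ k ∈ range m, s (m - k) = ∑ k ∈ range m, s (k + 1) := by
    rw [← sum_range_reflect (fun k => s (k + 1)) m]
    exact sum_congr rfl fun k hk => by grind
  have hs := sum_range_sub s m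
  have hw := sum_range_sub w m
  simp only [sum_add_distrib, sum_sub_distrib, ← mul_sum, hreflect] at hs hw ⊢
  rw [hw]
  linear_combination -hs

section LaurentIdentity

variable {E : Type} [Field E] {n : ℕ} {v : E} {G : ℤ → E}

variable (n v G) in
/-- For `t = x_i / x_{i+1}` and `G = g`,
`x^λ - t^n σ_i(x^λ) = x_{i+1}^N / (1 - v t^n) * demNumer t N c` when `x^λ = x_i^c x_{i+1}^(N-c)`
(`Setup.mon_sub_xalpha_pow_mul_act`). -/
def demNumer (t : E) (N c : ℤ) : E :=
  t ^ c - v * t ^ (c + n) - (1 - v) * t ^ (n + N - c - (N - 2 * c) % n) +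
    v * G (1 + N - 2 * c) * (t ^ (N - c + 1) - t ^ (N - c + 1 + n))

variable (n v G) in
/-- The coefficient `δ_a(c) h(c)` of the `c`-th monomial of `f`. -/
def fCoeff (a L c : ℤ) : E :=
  (if c < a then 0 else if c = a then -v else 1 - v) *
    (if c < L then hflat E n v c else gflat E v G c)

theorem demNumer_add_two_mul {t : E} (ht : t ≠ 0) (N c s : ℤ) :
    demNumer n v G t (N + 2 * s) (c + s) = t ^ s * demNumer n v G t N c := by
  simp only [demNumer, show N + 2 * s - 2 * (c + s) = N - 2 * c by ring,
    show 1 + (N + 2 * s) - 2 * (c + s) = 1 + N - 2 * c by ring]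
  rw [show c + s + n = c + n + s by ring,
    show n + (N + 2 * s) - (c + s) - (N - 2 * c) % n = n + N - c - (N - 2 * c) % n + s by ring,
    show N + 2 * s - (c + s) + 1 = N - c + 1 + s by ring,
    show N - c + 1 + s + n = N - c + 1 + n + s by ring]
  simp only [zpow_add₀ ht]
  ring

theorem demNumer_two_mul_sub_one (hn : 0 < n) (hG0 : G 0 = -1) (t : E) (c : ℤ) :
    demNumer n v G t (2 * c - 1) c = 0 := by
  have hmod : (2 * c - 1 - 2 * c) % n = n - 1 :=
    Int.emod_eq_of_dvd_sub ⟨-1, by ring⟩ (by omega) (by omega)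
  simp only [demNumer, hmod, show 1 + (2 * c - 1) - 2 * c = 0 by ring, hG0,
    show (n : ℤ) + (2 * c - 1) - c - (n - 1) = c by ring, show 2 * c - 1 - c + 1 = c by ring]
  ring

theorem demNumer_add_mul (hG : Function.Periodic G n) {a L ρ : ℤ} {m : ℕ}
    (hdiv : (n : ℤ) ∣ a) (hL : L = a + m * n + ρ + 1) (hρ0 : 0 ≤ ρ) (hρn : ρ < n)
    (t : E) {k : ℕ} (hk : k ≤ m + 1) :
    demNumer n v G t (L - 1 + a) (a + k * n) =
      t ^ (a + k * n) - v * t ^ (a + (k + 1 : ℕ) * n) -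
          (1 - v) * t ^ (a + (m + 1 - k : ℕ) * n) +
        v * G L * (t ^ (L + n - (k + 1 : ℕ) * n) - t ^ (L + n - k * n)) := by
  obtain ⟨α, rfl⟩ := hdiv
  subst hL
  have hmod : (n * α + m * n + ρ + 1 - 1 + n * α - 2 * (n * α + k * n)) % n = ρ :=
    Int.emod_eq_of_dvd_sub ⟨m - 2 * k, by ring⟩ hρ0 hρn
  have hGL : G (1 + (n * α + m * n + ρ + 1 - 1 + n * α) - 2 * (n * α + k * n)) =
      G (n * α + m * n + ρ + 1) := hG.eq_of_dvd_sub ⟨-α - 2 * k, by ring⟩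
  simp only [demNumer, hmod, hGL]
  push_cast [Nat.cast_sub hk]
  ring_nf

theorem fCoeff_of_lt {a L c : ℤ} (hca : c < a) : fCoeff n v G a L c = 0 := by
  simp [fCoeff, hca]

theorem fCoeff_of_not_dvd {a L c : ℤ} (hcL : c < L) (hdvd : ¬ (n : ℤ) ∣ c) :
    fCoeff n v G a L c = 0 := by
  simp [fCoeff, hcL, hflat, hdvd]

theorem fCoeff_of_dvd {a L c : ℤ} (hac : a ≤ c) (hcL : c < L) (hdvd : (n : ℤ) ∣ c) :
    fCoeff n v G a L c = (1 - v) * (1 - v) - if c = a then 1 - v else 0 := by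
  split_ifs with h
  · subst h
    simp only [fCoeff, lt_irrefl, hcL, hflat, hdvd, if_true, if_false]
    ring
  · simp [fCoeff, hcL, hflat, hdvd, h, hac.not_gt]

theorem fCoeff_self_of_lt {a L : ℤ} (haL : a < L) : fCoeff n v G a L L = (1 - v) * (v * G L) := by
  simp [fCoeff, haL.not_gt, haL.ne', gflat]

theorem mem_image_add_mul_iff {a L c : ℤ} {m : ℕ} (hdiv : (n : ℤ) ∣ a)
    (hL : a + m * n < L) (hL' : L ≤ a + (m + 1) * n) :
    c ∈ (range (m + 1)).image (fun k : ℕ => a + k * n) ↔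
      a ≤ c ∧ c < L ∧ (n : ℤ) ∣ c := by
  have hn : (0 : ℤ) < n := by nlinarith
  constructor
  · intro hc
    obtain ⟨k, hk, rfl⟩ := mem_image.mp hc
    have hkm : (k : ℤ) * n ≤ m * n :=
      mul_le_mul_of_nonneg_right (by exact_mod_cast Nat.lt_succ_iff.mp (mem_range.mp hk)) hn.le
    exact ⟨by nlinarith, by linarith, dvd_add hdiv (dvd_mul_left _ _)⟩
  · rintro ⟨hac, hcL, hdvd⟩
    obtain ⟨e, he⟩ := dvd_sub hdvd hdiv
    have he0 : 0 ≤ e := by nlinarith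
    have hem : e < m + 1 := by nlinarith
    refine mem_image.mpr ⟨e.toNat, mem_range.mpr (by omega), ?_⟩
    rw [Int.toNat_of_nonneg he0]
    linarith

theorem sum_Icc_fCoeff_mul {a L : ℤ} {m : ℕ} (ha : 1 ≤ a) (hdiv : (n : ℤ) ∣ a)
    (hL : a + m * n < L) (hL' : L ≤ a + (m + 1) * n) (F : ℤ → E) :
    ∑ c ∈ Icc 1 L, fCoeff n v G a L c * F c =
      fCoeff n v G a L L * F L +
        ∑ k ∈ range (m + 1), fCoeff n v G a L (a + k * n) * F (a + k * n) := by
  have hmem := fun c => mem_image_add_mul_iff (c := c) hdiv hL hL'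
  have hLD : L ∉ (range (m + 1)).image (fun k : ℕ => a + k * n) := by simp [hmem]
  have hsub : insert L ((range (m + 1)).image (fun k : ℕ => a + k * n)) ⊆ Icc 1 L := by
    intro c hc
    rcases mem_insert.mp hc with rfl | hc
    · exact mem_Icc.mpr ⟨by nlinarith, le_rfl⟩
    · obtain ⟨hac, hcL, -⟩ := (hmem c).mp hc
      exact mem_Icc.mpr ⟨by omega, hcL.le⟩
  have hzero : ∀ c ∈ Icc 1 L,
      c ∉ insert L ((range (m + 1)).image (fun k : ℕ => a + k * n)) →
        fCoeff n v G a L c * F c = 0 := by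
    intro c hc hcD
    rw [mem_insert, hmem, not_or] at hcD
    have hcL : c < L := lt_of_le_of_ne (mem_Icc.mp hc).2 hcD.1
    rcases lt_or_ge c a with hca | hac
    · rw [fCoeff_of_lt hca, zero_mul]
    · rw [fCoeff_of_not_dvd hcL fun hdvd => hcD.2 ⟨hac, hcL, hdvd⟩, zero_mul]
  rw [← sum_subset hsub hzero, sum_insert hLD, sum_image]
  intro x _ y _ hxy
  have hn : (n : ℤ) ≠ 0 := by rintro h; rw [h] at hL hL'; linarith
  exact_mod_cast mul_right_cancel₀ hn (add_left_cancel hxy)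

theorem sum_range_fCoeff_mul_demNumer (hG : Function.Periodic G n) {a L ρ : ℤ} {m : ℕ}
    (hdiv : (n : ℤ) ∣ a) (hL : L = a + m * n + ρ + 1) (hρ0 : 0 ≤ ρ) (hρn : ρ < n)
    (t : E) :
    ∑ k ∈ range (m + 1),
        fCoeff n v G a L (a + k * n) * demNumer n v G t (L - 1 + a) (a + k * n) =
      (1 - v) * (1 - v) * (t ^ a - t ^ (a + (m + 1 : ℕ) * n) +
          v * G L * (t ^ (a + ρ + 1) - t ^ (L + n))) -
        (1 - v) * (t ^ a - v * t ^ (a + n) - (1 - v) * t ^ (a + (m + 1 : ℕ) * n) +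
          v * G L * (t ^ L - t ^ (L + n))) := by
  have hn : (0 : ℤ) < n := by linarith
  set s : ℕ → E := fun j => t ^ (a + j * n) with hs
  set w : ℕ → E := fun j => t ^ (L + n - j * n) with hw
  have hterm : ∀ k ∈ range (m + 1),
      fCoeff n v G a L (a + k * n) * demNumer n v G t (L - 1 + a) (a + k * n) =
        (1 - v) * (1 - v) * (s k - v * s (k + 1) - (1 - v) * s (m + 1 - k) +
          v * G L * (w (k + 1) - w k)) -
        if k = 0 then (1 - v) * (s 0 - v * s 1 - (1 - v) * s (m + 1) +
          v * G L * (w 1 - w 0)) else 0 := by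
    intro k hk
    have hkn : (k : ℤ) * n ≤ m * n :=
      mul_le_mul_of_nonneg_right (by exact_mod_cast Nat.lt_succ_iff.mp (mem_range.mp hk)) hn.le
    rw [fCoeff_of_dvd (by nlinarith) (by linarith) (dvd_add hdiv (dvd_mul_left _ _)),
      demNumer_add_mul hG hdiv hL hρ0 hρn t (by have := mem_range.mp hk; omega)]
    rcases Nat.eq_zero_or_pos k with rfl | hk0
    · simp [hs, hw]
      ring
    · have : (k : ℤ) * n ≠ 0 := by positivity
      simp [hs, hw, hk0.ne', this]
  have hwm : L + n - ((m + 1 : ℕ) : ℤ) * n = a + ρ + 1 := by push_cast; linarith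
  rw [sum_congr rfl hterm, sum_sub_distrib, ← mul_sum, sum_range_reflect_telescope, sum_ite_eq',
    if_pos (by simp)]
  simp only [hs, hw, hwm, Nat.cast_zero, Nat.cast_one, zero_mul, one_mul, add_zero, sub_zero,
    add_sub_cancel_right]

theorem sum_fCoeff_mul_demNumer_of_lt (hG : Function.Periodic G n) (hG0 : G 0 = -1)
    (hGinv : ∀ i : ℤ, 1 ≤ i → i ≤ n - 1 → G i * G (n - i) = v⁻¹)
    {a L ρ : ℤ} {m : ℕ} (ha : 1 ≤ a) (hdiv : (n : ℤ) ∣ a) (hL : L = a + m * n + ρ + 1)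
    (hρ0 : 0 ≤ ρ) (hρn : ρ < n) (t : E) :
    ∑ c ∈ Icc 1 L, fCoeff n v G a L c * demNumer n v G t (L - 1 + a) c = 0 := by
  have hmn : (0 : ℤ) ≤ m * n := by positivity
  rw [sum_Icc_fCoeff_mul (m := m) ha hdiv (by linarith) (by linarith),
    sum_range_fCoeff_mul_demNumer hG hdiv hL hρ0 hρn, fCoeff_self_of_lt (by linarith)]
  simp only [demNumer, show L - 1 + a - 2 * L = a - 1 - L by ring,
    show 1 + (L - 1 + a) - 2 * L = a - L by ring, show L - 1 + a - L + 1 = a by ring]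
  obtain ⟨α, rfl⟩ := hdiv
  rw [hG.eq_of_dvd_sub (i := L) (j := ρ + 1) ⟨α + m, by rw [hL]; ring⟩,
    hG.eq_of_dvd_sub (i := n * α - L) (j := n - (ρ + 1)) ⟨-m - 1, by rw [hL]; ring⟩]
  -- `ρ = n - 1` exactly when `n ∣ L`
  rcases (show ρ = n - 1 ∨ ρ < n - 1 by omega) with rfl | hρ
  · have hmod : (n * α - 1 - L) % n = n - 1 :=
      Int.emod_eq_of_dvd_sub ⟨-m - 2, by rw [hL]; ring⟩ (by omega) (by omega)
    rw [hmod, show (n : ℤ) + (L - 1 + n * α) - L - (n - 1) = n * α by ring,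
      show (n : ℤ) - 1 + 1 = n by ring, show (n : ℤ) - n = 0 by ring, hG.eq.trans hG0, hG0,
      show n * α + (n - 1) + 1 = n * α + n by ring]
    ring
  · have hmod : (n * α - 1 - L) % n = n - 2 - ρ :=
      Int.emod_eq_of_dvd_sub ⟨-m - 1, by rw [hL]; ring⟩ (by omega) (by omega)
    have hrel : v * (v * (G (ρ + 1) * G (n - (ρ + 1)))) = v := by
      rw [hGinv (ρ + 1) (by omega) (by omega), ← mul_assoc, mul_self_mul_inv]
    rw [hmod, show (n : ℤ) + (L - 1 + n * α) - L - (n - 2 - ρ) = n * α + ρ + 1 by ring]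
    linear_combination (1 - v) * (t ^ (n * α) - t ^ (n * α + n)) * hrel

theorem sum_fCoeff_mul_demNumer (hG : Function.Periodic G n) (hG0 : G 0 = -1)
    (hGinv : ∀ i : ℤ, 1 ≤ i → i ≤ n - 1 → G i * G (n - i) = v⁻¹)
    {a : ℤ} (ha : 1 ≤ a) (hdiv : (n : ℤ) ∣ a) (L : ℤ) (t : E) :
    ∑ c ∈ Icc 1 L, fCoeff n v G a L c * demNumer n v G t (L - 1 + a) c = 0 := by
  have hn : (0 : ℤ) < n := by
    rcases Nat.eq_zero_or_pos n with h | h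
    · simp [h] at hdiv; omega
    · exact_mod_cast h
  rcases lt_trichotomy L a with hLa | rfl | haL
  · exact sum_eq_zero fun c hc => by
      rw [fCoeff_of_lt (by linarith [(mem_Icc.mp hc).2]), zero_mul]
  · rw [sum_eq_single_of_mem L (mem_Icc.mpr ⟨ha, le_rfl⟩)
      fun c hc hcL => by rw [fCoeff_of_lt (lt_of_le_of_ne (mem_Icc.mp hc).2 hcL), zero_mul],
      show L - 1 + L = 2 * L - 1 by ring, demNumer_two_mul_sub_one (by exact_mod_cast hn) hG0,
      mul_zero]
  · have hdecomp := Int.emod_add_mul_ediv (L - 1 - a) n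
    have hq : 0 ≤ (L - 1 - a) / n := Int.ediv_nonneg (by omega) hn.le
    refine sum_fCoeff_mul_demNumer_of_lt (m := ((L - 1 - a) / n).toNat) hG hG0 hGinv ha hdiv ?_
      (Int.emod_nonneg (L - 1 - a) hn.ne') (Int.emod_lt_of_pos (L - 1 - a) hn) t
    rw [Int.toNat_of_nonneg hq]
    linarith

end LaurentIdentity

theorem map_fCoeff {E E' : Type} [Field E] [Field E'] (φ : E →+* E') (n : ℕ) (v : E)
    (G : ℤ → E) (a L c : ℤ) : φ (fCoeff n v G a L c) = fCoeff n (φ v) (fun k => φ (G k)) a L c := by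
  simp only [fCoeff, hflat, gflat]
  split_ifs <;> simp

section RationalFunctions

variable {F : Type} [Field F] {r n : ℕ} {v : F} {g : ℤ → F}

theorem CC_eq_algebraMap (c : F) : CC F r c = algebraMap F (K F r) c := rfl

theorem XX_ne_zero (j : Fin (r + 1)) : XX F r j ≠ 0 :=
  (map_ne_zero_iff _ (IsFractionRing.injective _ _)).mpr (MvPolynomial.X_ne_zero j)

theorem xalpha_ne_zero (i : ℕ) : xalpha F r i ≠ 0 :=
  div_ne_zero (XX_ne_zero _) (XX_ne_zero _)

theorem natCast_ne_natCast_add_one {i : ℕ} (hi : i < r) :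
    (i : Fin (r + 1)) ≠ ((i + 1 : ℕ) : Fin (r + 1)) := by
  rw [Ne, Fin.ext_iff, Fin.val_cast_of_lt (by omega), Fin.val_cast_of_lt (by omega)]
  omega
theorem one_sub_CC_mul_xalpha_pow_ne_zero (hn : n ≠ 0) {i : ℕ} (hi : i < r) (c : F) :
    1 - CC F r c * xalpha F r i ^ n ≠ 0 := by
  intro h
  have hK : XX F r ((i + 1 : ℕ) : Fin (r + 1)) ^ n = CC F r c * XX F r (i : Fin (r + 1)) ^ n := by
    rw [xalpha, div_pow, mul_div_assoc', sub_eq_zero, eq_comm,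
      div_eq_one_iff_eq (pow_ne_zero _ (XX_ne_zero _))] at h
    exact h.symm
  have hpoly : (MvPolynomial.X ((i + 1 : ℕ) : Fin (r + 1)) ^ n : MvPolynomial (Fin (r + 1)) F) =
      MvPolynomial.C c * MvPolynomial.X (i : Fin (r + 1)) ^ n :=
    IsFractionRing.injective _ (K F r) (by simp only [map_mul, map_pow]; exact hK)
  have := congrArg (MvPolynomial.coeff (Finsupp.single ((i + 1 : ℕ) : Fin (r + 1)) n)) hpoly
  simp only [MvPolynomial.coeff_X_pow, MvPolynomial.coeff_C_mul, Finsupp.single_left_inj hn,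
    if_pos, if_neg (natCast_ne_natCast_add_one hi), mul_zero] at this
  exact one_ne_zero this

theorem mon_ite_ite {I J : Fin (r + 1)} (hIJ : I ≠ J) (p q : ℤ) :
    mon F r (fun j => if j = I then p else if j = J then q else 0) =
      XX F r I ^ p * XX F r J ^ q := by
  rw [mon, prod_eq_mul I J hIJ (fun j _ hj => by simp [hj.1, hj.2]) (by simp) (by simp)]
  simp [hIJ.symm]

theorem Setup.mon_sub_xalpha_pow_mul_act (S : Setup F r n v g) (hn : n ≠ 0) {i : ℕ} (hi : i < r)
    (p q : ℤ) :
    mon F r (fun j => if j = (i : Fin (r + 1)) then p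
        else if j = ((i + 1 : ℕ) : Fin (r + 1)) then q else 0) -
      xalpha F r i ^ n * S.act (sref r i) (mon F r (fun j => if j = (i : Fin (r + 1)) then p
        else if j = ((i + 1 : ℕ) : Fin (r + 1)) then q else 0)) =
    XX F r ((i + 1 : ℕ) : Fin (r + 1)) ^ (p + q) / (1 - CC F r v * xalpha F r i ^ n) *
      demNumer n (CC F r v) (fun k => CC F r (g k)) (xalpha F r i) (p + q) p := by
  have hIJ := natCast_ne_natCast_add_one (r := r) hi
  have hswap : (fun j => (fun j => if j = (i : Fin (r + 1)) then p
        else if j = ((i + 1 : ℕ) : Fin (r + 1)) then q else 0) (sref r i j)) =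
      fun j => if j = (i : Fin (r + 1)) then q
        else if j = ((i + 1 : ℕ) : Fin (r + 1)) then p else 0 := by
    funext j
    simp only [sref, Equiv.swap_apply_def]
    split_ifs <;> simp_all [eq_comm]
  rw [S.act_simple i hi, hswap, mon_ite_ite hIJ, mon_ite_ite hIJ]
  simp only [if_pos, if_neg hIJ.symm]
  have hd := one_sub_CC_mul_xalpha_pow_ne_zero (F := F) hn hi v
  have ht := xalpha_ne_zero (F := F) (r := r) i
  have hy := XX_ne_zero (F := F) ((i + 1 : ℕ) : Fin (r + 1))
  have hx : XX F r (i : Fin (r + 1)) = xalpha F r i * XX F r ((i + 1 : ℕ) : Fin (r + 1)) :=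
    (div_mul_cancel₀ _ hy).symm
  rw [hx]
  simp only [demNumer, show p + q - 2 * p = q - p by ring,
    show 1 + (p + q) - 2 * p = 1 + q - p by ring, mul_zpow, zpow_add₀ ht, zpow_add₀ hy,
    zpow_sub₀ ht, zpow_neg, zpow_natCast, zpow_one]
  -- the form of the denominator after `field_simp` normalizes it
  have hd' : 1 - xalpha F r i ^ n * CC F r v ≠ 0 := by rwa [mul_comm]
  field_simp
  ring

theorem Setup.act_sum (S : Setup F r n v g) (w : Equiv.Perm (Fin (r + 1))) {ι : Type*}
    (s : Finset ι) (f : ι → K F r) : S.act w (∑ k ∈ s, f k) = ∑ k ∈ s, S.act w (f k) :=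
  map_sum (AddMonoidHom.mk' (S.act w) (S.act_add w)) f s

theorem Setup.CC_mul_mon_sub_xalpha_pow_mul_act (S : Setup F r n v g) (hn : n ≠ 0) {i : ℕ}
    (hi : i < r) (x : F) (N c s : ℤ) :
    CC F r x * mon F r (fun j => if j = (i : Fin (r + 1)) then c + s
        else if j = ((i + 1 : ℕ) : Fin (r + 1)) then N - c + s else 0) -
      xalpha F r i ^ n * S.act (sref r i) (CC F r x * mon F r (fun j => if j = (i : Fin (r + 1))
        then c + s else if j = ((i + 1 : ℕ) : Fin (r + 1)) then N - c + s else 0)) =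
    XX F r ((i + 1 : ℕ) : Fin (r + 1)) ^ (N + 2 * s) / (1 - CC F r v * xalpha F r i ^ n) *
      xalpha F r i ^ s *
        (CC F r x * demNumer n (CC F r v) (fun k => CC F r (g k)) (xalpha F r i) N c) := by
  rw [S.act_const_mul, mul_left_comm, ← mul_sub, S.mon_sub_xalpha_pow_mul_act hn hi,
    show c + s + (N - c + s) = N + 2 * s by ring, demNumer_add_two_mul (xalpha_ne_zero i)]
  ring

end RationalFunctions

theorem statement19_general (r n : ℕ) (v : ℂ) (g : ℤ → ℂ)
    (hgper : ∀ i j : ℤ, i % (n : ℤ) = j % (n : ℤ) → g i = g j)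
    (hg0 : g 0 = -1)
    (hginv : ∀ i : ℤ, 1 ≤ i → i ≤ (n : ℤ) - 1 → g i * g ((n : ℤ) - i) = v⁻¹)
    (S : Setup ℂ r n v g)
    (a : ℤ) (ha : 1 ≤ a) (hdiv : (n : ℤ) ∣ a)
    (lam2 lam3 Γ13 : ℤ) :
    ∀ i : ℕ, i < r →
      Dem S i (∑ c ∈ Finset.Icc (1 : ℤ) (Γ13 + lam2 - lam3 + 1),
        CC ℂ r ((if c < a then 0 else if c = a then -v else 1 - v) *
          (if c < Γ13 + lam2 - lam3 + 1 then hflat ℂ n v c else gflat ℂ v g c)) *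
        mon ℂ r (fun j =>
          if j = (i : Fin (r+1)) then lam3 + c - Γ13
          else if j = ((i+1 : ℕ) : Fin (r+1)) then lam2 + a - c else 0)) = 0 := by
  intro i hi
  have hn : n ≠ 0 := by rintro rfl; simp at hdiv; omega
  set L := Γ13 + lam2 - lam3 + 1
  rw [Dem, div_eq_zero_iff, S.act_sum, mul_sum, ← sum_sub_distrib]
  left
  simp_rw [show ∀ c, lam3 + c - Γ13 = c + (lam3 - Γ13) from fun c => by ring,
    show ∀ c, lam2 + a - c = L - 1 + a - c + (lam3 - Γ13) from fun c => by ring]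
  change ∑ c ∈ Icc 1 L, (CC ℂ r (fCoeff n v g a L c) * _ -
    _ * S.act _ (CC ℂ r (fCoeff n v g a L c) * _)) = 0
  simp only [S.CC_mul_mon_sub_xalpha_pow_mul_act hn hi]
  rw [← mul_sum]
  simp only [CC_eq_algebraMap, map_fCoeff]
  rw [sum_fCoeff_mul_demNumer
    (fun x => congrArg (algebraMap ℂ (K ℂ r)) (hgper (x + n) x Int.emod_eq_add_self_emod.symm))
    (by simp [hg0]) (fun k h1 h2 => by rw [← map_mul, hginv k h1 h2, map_inv₀]) ha hdiv,
    mul_zero]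

/-- Lemma `LEMMA:FANNIHILATED`: for `n ∣ a`, `a ≥ 1`,
`λ_2 ≥ λ_3`, `Γ_{13} ≥ 0` and `L = Γ_{13} + λ_2 - λ_3 + 1`,
`D_i(Σ_{c=1}^{L} δ_a(c) h(c) x_i^{λ_3+c-Γ_{13}} x_{i+1}^{λ_2+a-c}) = 0`. -/
theorem statement19 (r n : ℕ) (hr : 1 ≤ r) (hn : 1 ≤ n) (v : ℂ) (g : ℤ → ℂ)
    (hv : v ≠ 0)
    (hgper : ∀ i j : ℤ, i % (n : ℤ) = j % (n : ℤ) → g i = g j)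
    (hg0 : g 0 = -1)
    (hginv : ∀ i : ℤ, 1 ≤ i → i ≤ (n : ℤ) - 1 → g i * g ((n : ℤ) - i) = v⁻¹)
    (S : Setup ℂ r n v g)
    (a : ℤ) (ha : 1 ≤ a) (hdiv : (n : ℤ) ∣ a)
    (lam2 lam3 Γ13 : ℤ) (hl : lam3 ≤ lam2) (hΓ : 0 ≤ Γ13) :
    ∀ i : ℕ, i < r →
      Dem S i (∑ c ∈ Finset.Icc (1 : ℤ) (Γ13 + lam2 - lam3 + 1),
        CC ℂ r ((if c < a then 0 else if c = a then -v else 1 - v) *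
          (if c < Γ13 + lam2 - lam3 + 1 then hflat ℂ n v c else gflat ℂ v g c)) *
        mon ℂ r (fun j =>
          if j = (i : Fin (r+1)) then lam3 + c - Γ13
          else if j = ((i+1 : ℕ) : Fin (r+1)) then lam2 + a - c else 0)) = 0 :=
  statement19_general r n v g hgper hg0 hginv S a ha hdiv lam2 lam3 Γ13

end MetaPaper
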